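/- Let d = 2h+1 with h ≥ 1, and for j ≥ 0 set Π_j := ∏_{l=0}^{j−1} (l·v + (d−l)·u) ∈ R. Then for every integer j ≥ h+1, the polynomial ∂Π_j belongs to the ideal of R generated by ∂Π_{h+1} and ∂Π_{h+2}. -/

import Mathlib

/-!
Write `Π_{j+1} = Π_j · f_j` with `f_l = l·v + (d−l)·u`. The Leibniz rule for divided differences gives
`∂Π_{l+1} = f_l · ∂Π_l + (d − 2l) · Π_l*`, and `d − 2l = −1` exactly at `l = h+1`. Hence
`Π_{h+1}* = f_{h+1} · ∂Π_{h+1} − ∂Π_{h+2}` lies in the ideal, so do all its multiples `Π_l*`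
for `l ≥ h+1`, and the recursion then carries `∂Π_l` into the ideal for every `l ≥ h+1`.
-/

noncomputable section

abbrev R2 : Type := MvPolynomial (Fin 2) ℚ

def uu : R2 := MvPolynomial.X 0
def vv : R2 := MvPolynomial.X 1

/-- The involution of `R2 = ℚ[u,v]` swapping `u` and `v`; `P*`. -/
def swapUV (P : R2) : R2 := MvPolynomial.rename (Equiv.swap (0 : Fin 2) 1) P

/-- `Q_k(y) = ∏_{j=0}^{k} (y + j·u + (k−j)·v)` in `R2[y]`. -/
def Qp (k : ℕ) : Polynomial R2 :=
  ∏ j ∈ Finset.range (k + 1),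
    (Polynomial.X + Polynomial.C ((j : R2) * uu + ((k - j : ℕ) : R2) * vv))

/-- `C_{d+1} = ∏_{j=0}^{d} (j·u + (d−j)·v)` in `R2`. -/
def Cdtop (d : ℕ) : R2 :=
  ∏ j ∈ Finset.range (d + 1), ((j : R2) * uu + ((d - j : ℕ) : R2) * vv)

/-- `Q_k(x_i)` as an element of `R2[x_1,…,x_r]`. -/
def Qm (r k : ℕ) (i : Fin r) : MvPolynomial (Fin r) R2 :=
  ∏ j ∈ Finset.range (k + 1),
    (MvPolynomial.X i + MvPolynomial.C ((j : R2) * uu + ((k - j : ℕ) : R2) * vv))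

open Finset

section Recurrence

variable {A : Type*} [CommRing A]

theorem mem_span_pair_of_recurrence (D S f c g : ℕ → A) (n : ℕ)
    (hD : ∀ l, D (l + 1) = f l * D l + c l * S l) (hS : ∀ l, S (l + 1) = S l * g l)
    (hc : IsUnit (c n)) :
    ∀ j, n ≤ j → D j ∈ Ideal.span ({D n, D (n + 1)} : Set A) := by
  set I := Ideal.span ({D n, D (n + 1)} : Set A)
  have hDn : D n ∈ I := Ideal.subset_span (by simp)
  have hDn1 : D (n + 1) ∈ I := Ideal.subset_span (by simp)
  obtain ⟨u, hu⟩ := hc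
  have hSn : S n ∈ I := by
    have : S n = ↑u⁻¹ * (D (n + 1) - f n * D n) := by
      rw [hD n, ← hu, add_sub_cancel_left, ← mul_assoc, Units.inv_mul, one_mul]
    rw [this]
    exact I.mul_mem_left _ (sub_mem hDn1 (I.mul_mem_left _ hDn))
  have hSj : ∀ j, n ≤ j → S j ∈ I := by
    intro j hj
    induction j, hj using Nat.le_induction with
    | base => exact hSn
    | succ l _ ih => rw [hS l]; exact I.mul_mem_right _ ih
  intro j hj
  induction j, hj using Nat.le_induction with
  | base => exact hDn
  | succ l hl ih =>
    rw [hD l]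
    exact add_mem (I.mul_mem_left _ ih) (I.mul_mem_left _ (hSj l hl))

/-- Leibniz rule for divided differences along a product `∏_{l<j} f_l`. -/
theorem divDiff_prod_range_succ [IsDomain A] (σ : A →+* A) (δ : A) (hδ : δ ≠ 0)
    (f c D : ℕ → A) (hc : ∀ l, δ * c l = f l - σ (f l))
    (hD : ∀ j, δ * D j = (∏ l ∈ range j, f l) - σ (∏ l ∈ range j, f l)) (l : ℕ) :
    D (l + 1) = f l * D l + c l * σ (∏ i ∈ range l, f i) := by
  apply mul_left_cancel₀ hδ
  rw [hD, prod_range_succ, map_mul, mul_add, ← mul_assoc, ← mul_assoc, mul_comm δ (f l),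
    mul_assoc, hD, hc]
  ring

end Recurrence

theorem uu_sub_vv_ne_zero : uu - vv ≠ 0 :=
  sub_ne_zero.mpr fun h => absurd (MvPolynomial.X_injective h) (by decide)

theorem sub_swapUV_linear (a b : ℕ) :
    (a : R2) * vv + b * uu - swapUV (a * vv + b * uu) = (uu - vv) * (b - a) := by
  simp only [swapUV, map_add, map_mul, MvPolynomial.rename_X, uu, vv, map_natCast,
    Equiv.swap_apply_left, Equiv.swap_apply_right]
  ring

theorem stmt19_general (h : ℕ) (d : ℕ) (hd : d = 2 * h + 1)
    (D : ℕ → R2)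
    (hD : ∀ j : ℕ, (uu - vv) * D j =
        (∏ l ∈ Finset.range j, ((l : R2) * vv + ((d - l : ℕ) : R2) * uu)) -
          swapUV (∏ l ∈ Finset.range j, ((l : R2) * vv + ((d - l : ℕ) : R2) * uu))) :
    ∀ j : ℕ, h + 1 ≤ j → D j ∈ Ideal.span ({D (h + 1), D (h + 2)} : Set R2) := by
  set σ : R2 →+* R2 := (MvPolynomial.rename (Equiv.swap (0 : Fin 2) 1)).toRingHom
  set f : ℕ → R2 := fun l => (l : R2) * vv + ((d - l : ℕ) : R2) * uu
  set c : ℕ → R2 := fun l => ((d - l : ℕ) : R2) - l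
  have hc : ∀ l, (uu - vv) * c l = f l - σ (f l) := fun l =>
    (sub_swapUV_linear _ _).symm
  have hc_unit : IsUnit (c (h + 1)) := by
    have : c (h + 1) = -1 := by
      simp only [c, show d - (h + 1) = h by omega]
      push_cast
      ring
    rw [this]
    exact isUnit_one.neg
  exact mem_span_pair_of_recurrence D (fun l => σ (∏ i ∈ range l, f i)) f c (fun l => σ (f l))
    (h + 1)
    (divDiff_prod_range_succ σ _ uu_sub_vv_ne_zero f c D hc hD)
    (fun l => by rw [prod_range_succ, map_mul]) hc_unit

/-- Final Remark of the paper: for `d = 2h+1` and `Π_j = ∏_{l=0}^{j−1}(lv+(d−l)u)`,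
every `∂Π_j` with `j ≥ h+1` lies in the ideal generated by `∂Π_{h+1}` and `∂Π_{h+2}`. -/
theorem stmt19 (h : ℕ) (hh : 1 ≤ h) (d : ℕ) (hd : d = 2 * h + 1)
    (D : ℕ → R2)
    (hD : ∀ j : ℕ, (uu - vv) * D j =
        (∏ l ∈ Finset.range j, ((l : R2) * vv + ((d - l : ℕ) : R2) * uu)) -
          swapUV (∏ l ∈ Finset.range j, ((l : R2) * vv + ((d - l : ℕ) : R2) * uu))) :
    ∀ j : ℕ, h + 1 ≤ j → D j ∈ Ideal.span ({D (h + 1), D (h + 2)} : Set R2) :=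
  stmt19_general h d hd D hD
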